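/- arXiv:1206.5030 — 4 statements merged into one kernel-verified Lean document; each statement's English description precedes it below -/
import Mathlib

section
/- Let f : ℕ → ℕ satisfy f(m·n) = f(m)·f(n) for all positive integers m, n, and suppose f is strictly increasing on the positive integers (1 ≤ m < n implies f(m) < f(n)). Then there exists a natural number r such that f(n) = n^r for all positive integers n. -/
/-!
Comparing `f (k ^ y)` with `f (m ^ x)` and approximating `log m / log k` by rationals `y / x`
shows that `log (f n) / log n` is constant, so `f n = n ^ c` for a real `c > 0`. If `c` were not
an integer, then with `r = ⌈c⌉` the `r`-th forward difference of `n ↦ n ^ c`, which is an integer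
because `f` is integer valued, would equal `c (c - 1) ⋯ (c - r + 1) ξ ^ (c - r)` for some `ξ ≥ n`
by the mean value theorem, and hence lie strictly between `0` and `1` for large `n`.
-/

open Real Filter Topology fwdDiff

theorem natCast_mul_log_lt_iff {p q : ℕ} (hp : 0 < p) (hq : 0 < q) (x y : ℕ) :
    (y : ℝ) * log p < x * log q ↔ p ^ y < q ^ x := by
  rw [← log_pow, ← log_pow, log_lt_log_iff (by positivity) (by positivity)]
  exact_mod_cast Iff.rfl

theorem mul_le_mul_of_forall_mul_lt_imp {a b A B : ℝ} (hb : 0 < b) (hA : 0 ≤ A) (hB : 0 < B)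
    (h : ∀ x y : ℕ, y * b < x * a → y * B < x * A) : a * B ≤ b * A := by
  by_contra! hlt
  obtain ⟨q, hAq, hqa⟩ :=
    exists_rat_btwn (show A / B < a / b from (div_lt_div_iff₀ hB hb).2 (by linarith))
  have hq : 0 < q := by exact_mod_cast (div_nonneg hA hB.le).trans_lt hAq
  have hnum : ((q.num.toNat : ℕ) : ℝ) = q.num := by
    exact_mod_cast Int.toNat_of_nonneg (Rat.num_pos.2 hq).le
  have hden : (0 : ℝ) < q.den := by exact_mod_cast q.pos
  rw [Rat.cast_def, ← hnum] at hAq hqa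
  rw [div_lt_div_iff₀ hden hb] at hqa
  rw [div_lt_div_iff₀ hB hden] at hAq
  linarith [h q.den q.num.toNat (by linarith)]

structure IsStrictMonoMultiplicative (f : ℕ → ℕ) : Prop where
  map_mul : ∀ m n : ℕ, 0 < m → 0 < n → f (m * n) = f m * f n
  lt_of_lt : ∀ m n : ℕ, 1 ≤ m → m < n → f m < f n

namespace IsStrictMonoMultiplicative

variable {f : ℕ → ℕ}

theorem map_one (hf : IsStrictMonoMultiplicative f) : f 1 = 1 := by
  have h11 : f 1 = f 1 * f 1 := by simpa using hf.map_mul 1 1 one_pos one_pos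
  have h21 : f 2 = f 2 * f 1 := by simpa using hf.map_mul 2 1 two_pos one_pos
  have h12 : f 1 < f 2 := hf.lt_of_lt 1 2 le_rfl one_lt_two
  rcases Nat.eq_zero_or_pos (f 1) with h0 | hpos
  · rw [h0, mul_zero] at h21
    omega
  · exact (Nat.mul_eq_left hpos.ne').1 h11.symm

theorem map_pow (hf : IsStrictMonoMultiplicative f) {m : ℕ} (hm : 0 < m) (k : ℕ) :
    f (m ^ k) = f m ^ k := by
  induction k with
  | zero => simp [hf.map_one]
  | succ k ih => rw [pow_succ, hf.map_mul _ _ (pow_pos hm k) hm, ih, pow_succ]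

theorem one_lt_apply (hf : IsStrictMonoMultiplicative f) {m : ℕ} (hm : 2 ≤ m) : 1 < f m :=
  hf.map_one ▸ hf.lt_of_lt 1 m le_rfl hm

theorem log_mul_log_le (hf : IsStrictMonoMultiplicative f) {m k : ℕ} (hm : 2 ≤ m) (hk : 2 ≤ k) :
    log m * log (f k) ≤ log k * log (f m) := by
  have hlog_pos {n : ℕ} (hn : 1 < n) : 0 < log n := log_pos (by exact_mod_cast hn)
  refine mul_le_mul_of_forall_mul_lt_imp (hlog_pos hk) (hlog_pos (hf.one_lt_apply hm)).le
    (hlog_pos (hf.one_lt_apply hk)) fun x y => ?_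
  have hf_pos {n : ℕ} (hn : 2 ≤ n) : 0 < f n := (hf.one_lt_apply hn).pos
  rw [natCast_mul_log_lt_iff (by omega : 0 < k) (by omega : 0 < m),
    natCast_mul_log_lt_iff (hf_pos hk) (hf_pos hm), ← hf.map_pow (by omega : 0 < k),
    ← hf.map_pow (by omega : 0 < m)]
  exact hf.lt_of_lt _ _ (Nat.one_le_pow _ _ (by omega))

theorem log_apply_mul_log_two (hf : IsStrictMonoMultiplicative f) {m : ℕ} (hm : 2 ≤ m) :
    log (f m) * log 2 = log m * log (f 2) := by
  have h₁ := hf.log_mul_log_le hm le_rfl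
  have h₂ := hf.log_mul_log_le le_rfl hm
  push_cast at h₁ h₂
  linarith

theorem exists_rpow (hf : IsStrictMonoMultiplicative f) :
    ∃ c : ℝ, 0 < c ∧ ∀ n : ℕ, 1 ≤ n → (f n : ℝ) = n ^ c := by
  have hlog2 : 0 < log 2 := log_pos one_lt_two
  have hf2 : (1 : ℝ) < f 2 := by exact_mod_cast hf.one_lt_apply le_rfl
  refine ⟨log (f 2) / log 2, div_pos (log_pos hf2) hlog2, fun n hn => ?_⟩
  obtain rfl | hn := hn.eq_or_lt
  · simp [hf.map_one]
  have hfn : (0 : ℝ) < f n := by exact_mod_cast (hf.one_lt_apply hn).le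
  calc (f n : ℝ) = exp (log (f n)) := (exp_log hfn).symm
    _ = exp (log n * (log (f 2) / log 2)) := by
      congr 1
      rw [mul_div_assoc', eq_div_iff hlog2.ne', ← hf.log_apply_mul_log_two hn]
    _ = n ^ (log (f 2) / log 2) := (rpow_def_of_pos (by positivity) _).symm

end IsStrictMonoMultiplicative

theorem AddSubgroup.fwdDiff_iter_mem {M G : Type*} [AddCommMonoid M] [AddCommGroup G]
    (S : AddSubgroup G) (h : M) {F : M → G} {y : M} (hF : ∀ k : ℕ, F (y + k • h) ∈ S) (n : ℕ) :
    Δ_[h] ^[n] F y ∈ S := by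
  rw [fwdDiff_iter_eq_sum_shift]
  exact S.sum_mem fun k _ => S.zsmul_mem (hF k) _

theorem exists_fwdDiff_iter_eq_of_hasDerivAt {a : ℝ} {h : ℕ → ℝ → ℝ}
    (hderiv : ∀ k, ∀ x, a < x → HasDerivAt (h k) (h (k + 1) x) x) (m : ℕ) {x : ℝ} (hx : a < x) :
    ∃ ξ ∈ Set.Icc x (x + m), Δ_[1] ^[m] (h 0) x = h m ξ := by
  induction m generalizing h x with
  | zero => exact ⟨x, by simp, rfl⟩
  | succ m ih =>
    obtain ⟨ξ, ⟨hxξ, hξx⟩, hξ⟩ := ih (h := fun k => Δ_[1] (h k))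
      (fun k y hy => ((hderiv k (y + 1) (by linarith)).comp_add_const y 1).sub (hderiv k y hy)) hx
    obtain ⟨η, ⟨hξη, hηξ⟩, hη⟩ := exists_hasDerivAt_eq_slope (h m) (h (m + 1)) (lt_add_one ξ)
      (fun y hy => (hderiv m y (by linarith [hy.1])).continuousAt.continuousWithinAt)
      (fun y hy => hderiv m y (by linarith [hy.1]))
    refine ⟨η, ⟨by linarith, by push_cast; linarith⟩, ?_⟩
    rw [Function.iterate_succ_apply, hξ, hη, add_sub_cancel_left, div_one]
    rfl

theorem hasDerivAt_iter_deriv_rpow_const (c : ℝ) (k : ℕ) {x : ℝ} (hx : 0 < x) :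
    HasDerivAt (deriv^[k] fun y : ℝ => y ^ c) (deriv^[k + 1] (fun y : ℝ => y ^ c) x) x := by
  rw [Function.iterate_succ_apply']
  have hiter : (deriv^[k] fun y : ℝ => y ^ c) =
      fun y => (descPochhammer ℝ k).eval c * y ^ (c - k) :=
    funext (iter_deriv_rpow_const c · k)
  rw [hiter]
  exact ((hasDerivAt_rpow_const (Or.inl hx.ne')).differentiableAt.const_mul _).hasDerivAt

theorem eventually_fwdDiff_iter_rpow_mem_Ioo {c : ℝ} {r : ℕ} (hlt : (r : ℝ) - 1 < c)
    (hgt : c < r) : ∀ᶠ x : ℝ in atTop, Δ_[1] ^[r] (fun y => y ^ c) x ∈ Set.Ioo 0 1 := by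
  set C := (descPochhammer ℝ r).eval c
  have hC : 0 < C := descPochhammer_pos hlt
  have hdecay : Tendsto (fun x : ℝ => C * x ^ (c - r)) atTop (𝓝 0) := by
    simpa using (tendsto_rpow_neg_atTop (sub_pos.2 hgt)).const_mul C
  filter_upwards [hdecay.eventually (gt_mem_nhds one_pos), eventually_gt_atTop 0] with x hx1 hx0
  obtain ⟨ξ, ⟨hxξ, -⟩, hξ⟩ := exists_fwdDiff_iter_eq_of_hasDerivAt
    (fun k _ hy => hasDerivAt_iter_deriv_rpow_const c k hy) r hx0
  rw [Function.iterate_zero_apply] at hξ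
  rw [hξ, iter_deriv_rpow_const]
  refine ⟨mul_pos hC (rpow_pos_of_pos (hx0.trans_le hxξ) _), lt_of_le_of_lt ?_ hx1⟩
  exact mul_le_mul_of_nonneg_left (rpow_le_rpow_of_nonpos hx0 hxξ (by linarith)) hC.le

theorem exists_nat_eq_of_forall_rpow_eq_intCast {c : ℝ} (hc : 0 ≤ c) (g : ℕ → ℤ)
    (hg : ∀ n : ℕ, 1 ≤ n → (n : ℝ) ^ c = g n) : ∃ r : ℕ, c = r := by
  refine ⟨⌈c⌉₊, (Nat.le_ceil c).eq_or_lt.resolve_right fun hcr => ?_⟩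
  have hrc : (⌈c⌉₊ : ℝ) - 1 < c := by linarith [Nat.ceil_lt_add_one hc]
  obtain ⟨N, hN, hN1⟩ := ((tendsto_natCast_atTop_atTop.eventually
    (eventually_fwdDiff_iter_rpow_mem_Ioo hrc hcr)).and (eventually_ge_atTop 1)).exists
  have hint : Δ_[1] ^[⌈c⌉₊] (fun y : ℝ => y ^ c) N ∈ (Int.castAddHom ℝ).range :=
    AddSubgroup.fwdDiff_iter_mem _ _ (fun k => AddMonoidHom.mem_range.2 ⟨g (N + k), by
      simp only [Int.coe_castAddHom, nsmul_one, ← Nat.cast_add, hg _ (by omega : 1 ≤ N + k)]⟩) _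
  obtain ⟨z, hz⟩ := hint
  simp only [← hz, Int.coe_castAddHom, Set.mem_Ioo, Int.cast_pos] at hN
  exact hN.2.not_ge (by exact_mod_cast hN.1)

/-- The arithmetic core of the Wootters–Hardy parameter lemma: a multiplicative,
strictly increasing function on the positive integers is a power function. -/
theorem stmt0 (f : ℕ → ℕ)
    (hmul : ∀ m n : ℕ, 0 < m → 0 < n → f (m * n) = f m * f n)
    (hmono : ∀ m n : ℕ, 1 ≤ m → m < n → f m < f n) :
    ∃ r : ℕ, ∀ n : ℕ, 0 < n → f n = n ^ r := by
  obtain ⟨c, hc, hfc⟩ := IsStrictMonoMultiplicative.exists_rpow ⟨hmul, hmono⟩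
  obtain ⟨r, rfl⟩ := exists_nat_eq_of_forall_rpow_eq_intCast hc.le (fun n => f n) fun n hn => by
    rw [Int.cast_natCast, hfc n hn]
  refine ⟨r, fun n hn => ?_⟩
  exact_mod_cast (hfc n hn).trans (rpow_natCast _ _)
end

section
/- Let G be a compact topological group equipped with its Haar probability measure, let n ≥ 1, and let ρ : G → O(n+1, ℝ) be a continuous group homomorphism fixing the first standard basis vector e₀ (ρ(g)e₀ = e₀ for all g), such that (i) every linear map of W := e₀^⊥ to itself commuting with all restrictions ρ(g)|_W is a real scalar multiple of the identity of W, and (ii) the only vectors of ℝ^{n+1} fixed by all ρ(g) are the multiples of e₀. Let k ≥ 1, let Q = I − e₀e₀ᵀ, and for a square matrix M indexed by the product type (Fin k) × (Fin (n+1)) let Tr₂ M denote the partial trace over the second factor, i.e. the k×k matrix (Tr₂ M)_{i,i'} = Σ_j M_{(i,j),(i',j)}. Then for every vector ψ ∈ ℝᵏ ⊗ ℝ^{n+1}: ∫_G (I_k ⊗ ρ(g)) ψψᵀ (I_k ⊗ ρ(g))ᵀ dg = Tr₂[(I_k ⊗ Q) ψψᵀ (I_k ⊗ Q)] ⊗ (Q/n)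 + Tr₂[(I_k ⊗ e₀e₀ᵀ) ψψᵀ (I_k ⊗ e₀e₀ᵀ)] ⊗ e₀e₀ᵀ. -/
open MeasureTheory Matrix Kronecker

attribute [local instance] Matrix.normedAddCommGroup Matrix.normedSpace

/-- Partial trace over the second factor of a matrix indexed by `Fin k × Fin n`. -/
def ptrace2 {k n : ℕ} (M : Matrix (Fin k × Fin n) (Fin k × Fin n) ℝ) :
    Matrix (Fin k) (Fin k) ℝ :=
  Matrix.of fun i i' => ∑ j : Fin n, M (i, j) (i', j)

/-!
Averaging over the Haar measure makes the twirl `C = ∫ ρ(g) A ρ(g)ᵀ dg` commute with every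
`ρ(g)`, and the two hypotheses on `ρ` force such a `C` into the span of `P = e₀e₀ᵀ` and
`Q = 1 - P`: the off-diagonal blocks `QCP` and `PCQ` vanish because `QCe₀` is a fixed vector,
hence a multiple of `e₀`, lying in the range of `Q`; and `QCQ` is a multiple of `Q`. The two
coefficients are read off from traces, which the twirl preserves after compressing by `P` or `Q`.
The theorem is this formula applied to each `(i, i')` block of `ψψᵀ`, since `1 ⊗ ρ(g)` conjugates
every block by `ρ(g)`.
-/

/-- The topology of `Matrix.normedAddCommGroup` is the product topology only up to unfolding,
so instance search does not find this instance (needed for `Integrable`) by itself. -/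
@[reducible] noncomputable def Matrix.continuousENorm {m n α : Type*} [Fintype m] [Fintype n]
    [NormedAddCommGroup α] : ContinuousENorm (Matrix m n α) :=
  SeminormedAddGroup.toContinuousENorm

attribute [local instance] Matrix.continuousENorm

section Integral

variable {X : Type*} [MeasurableSpace X] {μ : Measure X} {m n : Type*} [Fintype m] [Fintype n]

lemma Matrix.integral_apply {F : X → Matrix m n ℝ} (hF : Integrable F μ) (i : m) (j : n) :
    (∫ x, F x ∂μ) i j = ∫ x, F x i j ∂μ :=
  ((entryLinearMap ℝ ℝ i j).toContinuousLinearMap.integral_comp_comm hF).symm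

lemma Matrix.integral_mul_mul {F : X → Matrix m m ℝ} (hF : Integrable F μ)
    (M M' : Matrix m m ℝ) : ∫ x, M * F x * M' ∂μ = M * (∫ x, F x ∂μ) * M' :=
  ((LinearMap.mulRight ℝ M').comp (LinearMap.mulLeft ℝ M)).toContinuousLinearMap
    |>.integral_comp_comm hF

lemma Matrix.integral_trace {F : X → Matrix m m ℝ} (hF : Integrable F μ) :
    ∫ x, trace (F x) ∂μ = trace (∫ x, F x ∂μ) :=
  (traceLinearMap m ℝ ℝ).toContinuousLinearMap.integral_comp_comm hF

end Integral

lemma Continuous.matrix_kronecker {X : Type*} [TopologicalSpace X] {l m n p R : Type*}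
    [TopologicalSpace R] [Mul R] [ContinuousMul R] {A : X → Matrix l m R} {B : X → Matrix n p R}
    (hA : Continuous A) (hB : Continuous B) : Continuous fun x => A x ⊗ₖ B x :=
  continuous_matrix fun _ _ => (hA.matrix_elem _ _).mul (hB.matrix_elem _ _)

section OrthogonalRepresentation

variable {G : Type*} [Group G] {m : Type*} [Fintype m] [DecidableEq m]
  (ρ : G →* orthogonalGroup m ℝ)

lemma coe_map_mul_orthogonalGroup (g h : G) :
    (ρ (g * h) : Matrix m m ℝ) = (ρ g : Matrix m m ℝ) * (ρ h : Matrix m m ℝ) := by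
  rw [map_mul]; rfl

lemma coe_map_inv_orthogonalGroup (g : G) :
    (ρ g⁻¹ : Matrix m m ℝ) = (ρ g : Matrix m m ℝ)ᵀ := by
  rw [map_inv]; rfl

lemma transpose_mul_coe_orthogonalGroup (g : G) :
    (ρ g : Matrix m m ℝ)ᵀ * (ρ g : Matrix m m ℝ) = 1 :=
  (mem_orthogonalGroup_iff' _ _).1 (ρ g).2

lemma commute_transpose_of_forall_commute {D : Matrix m m ℝ}
    (hD : ∀ g, Commute D (ρ g : Matrix m m ℝ)) (g : G) :
    Commute Dᵀ (ρ g : Matrix m m ℝ) := by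
  have h := congrArg transpose (hD g⁻¹).eq
  rw [transpose_mul, transpose_mul, coe_map_inv_orthogonalGroup, transpose_transpose] at h
  exact h.symm

end OrthogonalRepresentation

section Twirl

variable {G : Type*} [Group G] [MeasurableSpace G] [TopologicalSpace G] [CompactSpace G]
  {m : Type*} [Fintype m] [DecidableEq m]

noncomputable def twirl (μ : Measure G) (ρ : G →* orthogonalGroup m ℝ) (A : Matrix m m ℝ) :
    Matrix m m ℝ :=
  ∫ g, (ρ g : Matrix m m ℝ) * A * (ρ g : Matrix m m ℝ)ᵀ ∂μ

variable {μ : Measure G} {ρ : G →* orthogonalGroup m ℝ}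

lemma integrable_conj [OpensMeasurableSpace G] [IsFiniteMeasure μ]
    (hρ : Continuous fun g => (ρ g : Matrix m m ℝ)) (A : Matrix m m ℝ) :
    Integrable (fun g => (ρ g : Matrix m m ℝ) * A * (ρ g : Matrix m m ℝ)ᵀ) μ :=
  ((hρ.matrix_mul continuous_const).matrix_mul hρ.matrix_transpose).integrable_of_hasCompactSupport
    (HasCompactSupport.of_compactSpace _)

lemma mul_twirl_mul [OpensMeasurableSpace G] [IsFiniteMeasure μ]
    (hρ : Continuous fun g => (ρ g : Matrix m m ℝ)) (M A M' : Matrix m m ℝ) :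
    M * twirl μ ρ A * M' = ∫ g, M * ((ρ g : Matrix m m ℝ) * A * (ρ g : Matrix m m ℝ)ᵀ) * M' ∂μ :=
  (integral_mul_mul (integrable_conj hρ A) M M').symm

lemma twirl_conj_of_commute [OpensMeasurableSpace G] [IsFiniteMeasure μ]
    (hρ : Continuous fun g => (ρ g : Matrix m m ℝ)) {M : Matrix m m ℝ}
    (hM : ∀ g, Commute M (ρ g : Matrix m m ℝ)) (A : Matrix m m ℝ) :
    M * twirl μ ρ A * Mᵀ = twirl μ ρ (M * A * Mᵀ) := by
  rw [mul_twirl_mul hρ, twirl]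
  congr 1 with g : 1
  have hMt : (ρ g : Matrix m m ℝ)ᵀ * Mᵀ = Mᵀ * (ρ g : Matrix m m ℝ)ᵀ := by
    rw [← transpose_mul, (hM g).eq, transpose_mul]
  calc M * ((ρ g : Matrix m m ℝ) * A * (ρ g : Matrix m m ℝ)ᵀ) * Mᵀ
      = M * (ρ g : Matrix m m ℝ) * A * ((ρ g : Matrix m m ℝ)ᵀ * Mᵀ) := by
        simp only [Matrix.mul_assoc]
    _ = (ρ g : Matrix m m ℝ) * (M * A * Mᵀ) * (ρ g : Matrix m m ℝ)ᵀ := by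
        rw [(hM g).eq, hMt]; simp only [Matrix.mul_assoc]

lemma trace_twirl [OpensMeasurableSpace G] [IsProbabilityMeasure μ]
    (hρ : Continuous fun g => (ρ g : Matrix m m ℝ)) (A : Matrix m m ℝ) :
    trace (twirl μ ρ A) = trace A := by
  rw [twirl, ← integral_trace (integrable_conj hρ A)]
  simp [trace_mul_cycle _ A, transpose_mul_coe_orthogonalGroup]

lemma trace_mul_twirl_mul_transpose [OpensMeasurableSpace G] [IsProbabilityMeasure μ]
    (hρ : Continuous fun g => (ρ g : Matrix m m ℝ)) {M : Matrix m m ℝ}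
    (hM : ∀ g, Commute M (ρ g : Matrix m m ℝ)) (A : Matrix m m ℝ) :
    trace (M * twirl μ ρ A * Mᵀ) = trace (M * A * Mᵀ) := by
  rw [twirl_conj_of_commute hρ hM, trace_twirl hρ]

lemma twirl_conj [IsTopologicalGroup G] [BorelSpace G] [IsFiniteMeasure μ]
    [μ.IsMulLeftInvariant] (hρ : Continuous fun g => (ρ g : Matrix m m ℝ))
    (A : Matrix m m ℝ) (h : G) :
    (ρ h : Matrix m m ℝ) * twirl μ ρ A * (ρ h : Matrix m m ℝ)ᵀ = twirl μ ρ A := by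
  have hconj : ∀ g, (ρ h : Matrix m m ℝ) * ((ρ g : Matrix m m ℝ) * A * (ρ g : Matrix m m ℝ)ᵀ)
      * (ρ h : Matrix m m ℝ)ᵀ = (ρ (h * g) : Matrix m m ℝ) * A * (ρ (h * g) : Matrix m m ℝ)ᵀ := by
    intro g
    rw [coe_map_mul_orthogonalGroup, transpose_mul]
    simp only [Matrix.mul_assoc]
  simp_rw [mul_twirl_mul hρ, hconj]
  exact integral_mul_left_eq_self (fun g => (ρ g : Matrix m m ℝ) * A * (ρ g : Matrix m m ℝ)ᵀ) h

lemma commute_twirl [IsTopologicalGroup G] [BorelSpace G] [IsFiniteMeasure μ]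
    [μ.IsMulLeftInvariant] (hρ : Continuous fun g => (ρ g : Matrix m m ℝ))
    (A : Matrix m m ℝ) (h : G) : Commute (twirl μ ρ A) (ρ h : Matrix m m ℝ) :=
  calc twirl μ ρ A * (ρ h : Matrix m m ℝ)
      = (ρ h : Matrix m m ℝ) * twirl μ ρ A * ((ρ h : Matrix m m ℝ)ᵀ * ρ h) := by
        rw [← Matrix.mul_assoc, twirl_conj hρ]
    _ = (ρ h : Matrix m m ℝ) * twirl μ ρ A := by
        rw [transpose_mul_coe_orthogonalGroup, Matrix.mul_one]

end Twirl

section RankOneProjection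

variable {m : Type*} [Fintype m] {e : m → ℝ}

lemma vecMulVec_self_mul_self (he : e ⬝ᵥ e = 1) :
    vecMulVec e e * vecMulVec e e = vecMulVec e e := by
  rw [vecMulVec_mul_vecMulVec, he, one_smul]

lemma vecMulVec_mul_mul_vecMulVec (he : e ⬝ᵥ e = 1) (B : Matrix m m ℝ) :
    vecMulVec e e * B * vecMulVec e e
      = trace (vecMulVec e e * B * vecMulVec e e) • vecMulVec e e := by
  have h : vecMulVec e e * B * vecMulVec e e = ((e ᵥ* B) ⬝ᵥ e) • vecMulVec e e := by
    rw [vecMulVec_mul, vecMulVec_mul_vecMulVec, vecMulVec_smul]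
  rw [h, trace_smul, trace_vecMulVec, he, smul_eq_mul, mul_one]

variable [DecidableEq m]

lemma one_sub_vecMulVec_mul_vecMulVec (he : e ⬝ᵥ e = 1) :
    (1 - vecMulVec e e) * vecMulVec e e = 0 := by
  rw [Matrix.sub_mul, Matrix.one_mul, vecMulVec_self_mul_self he, sub_self]

lemma one_sub_vecMulVec_mul_self (he : e ⬝ᵥ e = 1) :
    (1 - vecMulVec e e) * (1 - vecMulVec e e) = 1 - vecMulVec e e := by
  rw [Matrix.mul_sub, Matrix.mul_one, one_sub_vecMulVec_mul_vecMulVec he, sub_zero]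

end RankOneProjection

section Commutant

variable {G : Type*} [Group G] {m : Type*} [Fintype m] [DecidableEq m]
  {ρ : G →* orthogonalGroup m ℝ} {e : m → ℝ}

lemma commute_vecMulVec_of_forall_mulVec_eq (hfix : ∀ g, (ρ g : Matrix m m ℝ) *ᵥ e = e)
    (g : G) : Commute (vecMulVec e e) (ρ g : Matrix m m ℝ) := by
  have hleft : vecMulVec e e * (ρ g : Matrix m m ℝ) = vecMulVec e e := by
    rw [vecMulVec_mul, ← mulVec_transpose, ← coe_map_inv_orthogonalGroup, hfix]
  rw [Commute, SemiconjBy, hleft, mul_vecMulVec, hfix]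

lemma commute_one_sub_vecMulVec_of_forall_mulVec_eq
    (hfix : ∀ g, (ρ g : Matrix m m ℝ) *ᵥ e = e) (g : G) :
    Commute (1 - vecMulVec e e) (ρ g : Matrix m m ℝ) :=
  (Commute.one_left _).sub_left (commute_vecMulVec_of_forall_mulVec_eq hfix g)

lemma one_sub_vecMulVec_mul_mul_vecMulVec_eq_zero (he : e ⬝ᵥ e = 1)
    (hfix : ∀ g, (ρ g : Matrix m m ℝ) *ᵥ e = e)
    (hinv : ∀ x : m → ℝ, (∀ g, (ρ g : Matrix m m ℝ) *ᵥ x = x) → ∃ c : ℝ, x = c • e)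
    {D : Matrix m m ℝ} (hD : ∀ g, Commute D (ρ g : Matrix m m ℝ)) :
    (1 - vecMulVec e e) * D * vecMulVec e e = 0 := by
  set Q := 1 - vecMulVec e e
  obtain ⟨c, hc⟩ := hinv ((Q * D) *ᵥ e) fun g => by
    rw [mulVec_mulVec, ← Matrix.mul_assoc,
      ← (commute_one_sub_vecMulVec_of_forall_mulVec_eq hfix g).eq, Matrix.mul_assoc,
      ← (hD g).eq, ← Matrix.mul_assoc, ← mulVec_mulVec, hfix]
  have hQDP : Q * D * vecMulVec e e = c • vecMulVec e e := by
    rw [mul_vecMulVec, hc, smul_vecMulVec]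
  calc Q * D * vecMulVec e e = Q * (Q * D * vecMulVec e e) := by
        rw [← Matrix.mul_assoc, ← Matrix.mul_assoc, one_sub_vecMulVec_mul_self he]
    _ = 0 := by
        rw [hQDP, Matrix.mul_smul, one_sub_vecMulVec_mul_vecMulVec he, smul_zero]

lemma eq_smul_add_smul_of_forall_commute (he : e ⬝ᵥ e = 1)
    (hfix : ∀ g, (ρ g : Matrix m m ℝ) *ᵥ e = e)
    (hW : ∀ A : Matrix m m ℝ, A = (1 - vecMulVec e e) * A * (1 - vecMulVec e e) →
      (∀ g : G, A * (ρ g : Matrix m m ℝ) = (ρ g : Matrix m m ℝ) * A) →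
      ∃ c : ℝ, A = c • (1 - vecMulVec e e))
    (hinv : ∀ x : m → ℝ, (∀ g, (ρ g : Matrix m m ℝ) *ᵥ x = x) → ∃ c : ℝ, x = c • e)
    (htrQ : trace (1 - vecMulVec e e) ≠ 0)
    {C : Matrix m m ℝ} (hC : ∀ g, Commute C (ρ g : Matrix m m ℝ)) :
    C = ((trace (1 - vecMulVec e e))⁻¹ * trace ((1 - vecMulVec e e) * C * (1 - vecMulVec e e)))
          • (1 - vecMulVec e e)
        + trace (vecMulVec e e * C * vecMulVec e e) • vecMulVec e e := by
  set P := vecMulVec e e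
  set Q := 1 - P
  have hQCP : Q * C * P = 0 := one_sub_vecMulVec_mul_mul_vecMulVec_eq_zero he hfix hinv hC
  have hPCQ : P * C * Q = 0 := by
    have hPt : Pᵀ = P := transpose_vecMulVec e e
    have h := congrArg transpose (one_sub_vecMulVec_mul_mul_vecMulVec_eq_zero he hfix hinv
      (commute_transpose_of_forall_commute ρ hC))
    rwa [transpose_mul, transpose_mul, transpose_transpose, hPt, transpose_sub, transpose_one,
      hPt, ← Matrix.mul_assoc, transpose_zero] at h
  have hQQ : Q * Q = Q := one_sub_vecMulVec_mul_self he
  obtain ⟨c, hc⟩ : ∃ c : ℝ, Q * C * Q = c • Q := by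
    refine hW _ ?_ fun g => ?_
    · simp only [Matrix.mul_assoc]
      rw [← Matrix.mul_assoc Q Q, hQQ]
    · have hQg := commute_one_sub_vecMulVec_of_forall_mulVec_eq hfix g
      exact ((hQg.mul_left (hC g)).mul_left hQg).eq
  have hcQ : (trace Q)⁻¹ * trace (Q * C * Q) = c := by
    rw [hc, trace_smul, smul_eq_mul, mul_comm, mul_inv_cancel_right₀ htrQ]
  calc C = (P + Q) * C * (P + Q) := by rw [add_sub_cancel, Matrix.one_mul, Matrix.mul_one]
    _ = P * C * P + P * C * Q + Q * C * P + Q * C * Q := by noncomm_ring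
    _ = _ := by
      rw [hPCQ, hQCP, hcQ, hc, ← vecMulVec_mul_mul_vecMulVec he, add_zero, add_zero, add_comm]

end Commutant

theorem twirl_eq {G : Type*} [Group G] [TopologicalSpace G] [IsTopologicalGroup G]
    [CompactSpace G] [MeasurableSpace G] [BorelSpace G]
    {μ : Measure G} [μ.IsHaarMeasure] [IsProbabilityMeasure μ]
    {m : Type*} [Fintype m] [DecidableEq m] {ρ : G →* orthogonalGroup m ℝ}
    (hρ : Continuous fun g => (ρ g : Matrix m m ℝ)) {e : m → ℝ} (he : e ⬝ᵥ e = 1)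
    (hfix : ∀ g, (ρ g : Matrix m m ℝ) *ᵥ e = e)
    (hW : ∀ A : Matrix m m ℝ, A = (1 - vecMulVec e e) * A * (1 - vecMulVec e e) →
      (∀ g : G, A * (ρ g : Matrix m m ℝ) = (ρ g : Matrix m m ℝ) * A) →
      ∃ c : ℝ, A = c • (1 - vecMulVec e e))
    (hinv : ∀ x : m → ℝ, (∀ g, (ρ g : Matrix m m ℝ) *ᵥ x = x) → ∃ c : ℝ, x = c • e)
    (htrQ : trace (1 - vecMulVec e e) ≠ 0) (A : Matrix m m ℝ) :
    twirl μ ρ A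
      = ((trace (1 - vecMulVec e e))⁻¹ * trace ((1 - vecMulVec e e) * A * (1 - vecMulVec e e)))
          • (1 - vecMulVec e e)
        + trace (vecMulVec e e * A * vecMulVec e e) • vecMulVec e e := by
  have hPt : (vecMulVec e e)ᵀ = vecMulVec e e := transpose_vecMulVec e e
  have hQt : (1 - vecMulVec e e)ᵀ = 1 - vecMulVec e e := by
    rw [transpose_sub, transpose_one, hPt]
  have htrP := trace_mul_twirl_mul_transpose (μ := μ) hρ
    (commute_vecMulVec_of_forall_mulVec_eq hfix) A
  have htrQ' := trace_mul_twirl_mul_transpose (μ := μ) hρ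
    (commute_one_sub_vecMulVec_of_forall_mulVec_eq hfix) A
  rw [hPt] at htrP
  rw [hQt] at htrQ'
  rw [eq_smul_add_smul_of_forall_commute he hfix hW hinv htrQ (commute_twirl hρ A), htrP, htrQ']

section Kronecker

variable {ι m : Type*} [Fintype ι] [DecidableEq ι] [Fintype m]

lemma one_kronecker_mul_mul_one_kronecker_apply (M M' : Matrix m m ℝ)
    (X : Matrix (ι × m) (ι × m) ℝ) (i i' : ι) (a a' : m) :
    (((1 : Matrix ι ι ℝ) ⊗ₖ M) * X * ((1 : Matrix ι ι ℝ) ⊗ₖ M')) (i, a) (i', a')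
      = (M * (comp ι ι m m ℝ).symm X i i' * M') a a' := by
  simp [mul_apply, one_apply, Fintype.sum_prod_type, Finset.sum_mul]

end Kronecker

lemma ptrace2_one_kronecker_mul_mul_one_kronecker {k n : ℕ} (M M' : Matrix (Fin n) (Fin n) ℝ)
    (X : Matrix (Fin k × Fin n) (Fin k × Fin n) ℝ) (i i' : Fin k) :
    ptrace2 (((1 : Matrix (Fin k) (Fin k) ℝ) ⊗ₖ M) * X * ((1 : Matrix (Fin k) (Fin k) ℝ) ⊗ₖ M'))
        i i'
      = trace (M * (comp (Fin k) (Fin k) (Fin n) (Fin n) ℝ).symm X i i' * M') := by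
  simp only [ptrace2, of_apply, one_kronecker_mul_mul_one_kronecker_apply, trace, diag_apply]

theorem stmt6_general {G : Type*} [Group G] [TopologicalSpace G] [IsTopologicalGroup G]
    [CompactSpace G] [MeasurableSpace G] [BorelSpace G]
    (μ : Measure G) [μ.IsHaarMeasure] [IsProbabilityMeasure μ]
    (n : ℕ) (hn : 1 ≤ n)
    (ρ : G →* Matrix.orthogonalGroup (Fin (n + 1)) ℝ)
    (hρ : Continuous fun g => (ρ g : Matrix (Fin (n + 1)) (Fin (n + 1)) ℝ))
    (e₀ : Fin (n + 1) → ℝ) (he₀ : e₀ = fun i => if i = 0 then 1 else 0)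
    (hfix : ∀ g : G, (ρ g : Matrix (Fin (n + 1)) (Fin (n + 1)) ℝ) *ᵥ e₀ = e₀)
    (Q : Matrix (Fin (n + 1)) (Fin (n + 1)) ℝ) (hQ : Q = 1 - vecMulVec e₀ e₀)
    (hW : ∀ A : Matrix (Fin (n + 1)) (Fin (n + 1)) ℝ, A = Q * A * Q →
      (∀ g : G, A * (ρ g : Matrix (Fin (n + 1)) (Fin (n + 1)) ℝ)
        = (ρ g : Matrix (Fin (n + 1)) (Fin (n + 1)) ℝ) * A) →
      ∃ c : ℝ, A = c • Q)
    (hinv : ∀ x : Fin (n + 1) → ℝ,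
      (∀ g : G, (ρ g : Matrix (Fin (n + 1)) (Fin (n + 1)) ℝ) *ᵥ x = x) →
      ∃ c : ℝ, x = c • e₀)
    (k : ℕ) (ψ : Fin k × Fin (n + 1) → ℝ) :
    ∫ g, ((1 : Matrix (Fin k) (Fin k) ℝ) ⊗ₖ (ρ g : Matrix (Fin (n + 1)) (Fin (n + 1)) ℝ))
          * vecMulVec ψ ψ *
          ((1 : Matrix (Fin k) (Fin k) ℝ) ⊗ₖ (ρ g : Matrix (Fin (n + 1)) (Fin (n + 1)) ℝ))ᵀ ∂μ
      = (ptrace2 (((1 : Matrix (Fin k) (Fin k) ℝ) ⊗ₖ Q) * vecMulVec ψ ψ *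
            ((1 : Matrix (Fin k) (Fin k) ℝ) ⊗ₖ Q))) ⊗ₖ ((n : ℝ)⁻¹ • Q)
        + (ptrace2 (((1 : Matrix (Fin k) (Fin k) ℝ) ⊗ₖ vecMulVec e₀ e₀) * vecMulVec ψ ψ *
            ((1 : Matrix (Fin k) (Fin k) ℝ) ⊗ₖ vecMulVec e₀ e₀))) ⊗ₖ vecMulVec e₀ e₀ := by
  have he : e₀ ⬝ᵥ e₀ = 1 := by simp [he₀, dotProduct]
  have htrQ : trace Q = n := by
    rw [hQ, trace_sub, trace_one, trace_vecMulVec, he, Fintype.card_fin]; push_cast; ring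
  have hn0 : (n : ℝ) ≠ 0 := Nat.cast_ne_zero.2 (by omega)
  subst hQ
  have hint : Integrable (fun g => ((1 : Matrix (Fin k) (Fin k) ℝ) ⊗ₖ (ρ g : Matrix _ _ ℝ))
      * vecMulVec ψ ψ * ((1 : Matrix (Fin k) (Fin k) ℝ) ⊗ₖ (ρ g : Matrix _ _ ℝ))ᵀ) μ :=
    (((continuous_const.matrix_kronecker hρ).matrix_mul continuous_const).matrix_mul
      (continuous_const.matrix_kronecker hρ).matrix_transpose).integrable_of_hasCompactSupport
      (HasCompactSupport.of_compactSpace _)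
  ext ⟨i, a⟩ ⟨i', a'⟩
  rw [integral_apply hint]
  simp only [← kroneckerMap_transpose, transpose_one, one_kronecker_mul_mul_one_kronecker_apply]
  rw [← integral_apply (integrable_conj hρ _), ← twirl, twirl_eq hρ he hfix hW hinv (htrQ ▸ hn0),
    htrQ]
  simp only [Matrix.add_apply, Matrix.smul_apply, smul_eq_mul, kroneckerMap_apply,
    ptrace2_one_kronecker_mul_mul_one_kronecker]
  ring

/-- Abstract content of the paper's Lemma `LemI`: Haar-averaged one-sided conjugation of the
rank-one operator `ψψᵀ` of a bipartite vector, for a representation fixing `e₀` and acting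
with trivial commutant on `W = e₀^⊥`. -/
theorem stmt6 {G : Type*} [Group G] [TopologicalSpace G] [IsTopologicalGroup G]
    [CompactSpace G] [MeasurableSpace G] [BorelSpace G]
    (μ : Measure G) [μ.IsHaarMeasure] [IsProbabilityMeasure μ]
    (n : ℕ) (hn : 1 ≤ n)
    (ρ : G →* Matrix.orthogonalGroup (Fin (n + 1)) ℝ)
    (hρ : Continuous fun g => (ρ g : Matrix (Fin (n + 1)) (Fin (n + 1)) ℝ))
    (e₀ : Fin (n + 1) → ℝ) (he₀ : e₀ = fun i => if i = 0 then 1 else 0)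
    (hfix : ∀ g : G, (ρ g : Matrix (Fin (n + 1)) (Fin (n + 1)) ℝ) *ᵥ e₀ = e₀)
    (Q : Matrix (Fin (n + 1)) (Fin (n + 1)) ℝ) (hQ : Q = 1 - vecMulVec e₀ e₀)
    (hW : ∀ A : Matrix (Fin (n + 1)) (Fin (n + 1)) ℝ, A = Q * A * Q →
      (∀ g : G, A * (ρ g : Matrix (Fin (n + 1)) (Fin (n + 1)) ℝ)
        = (ρ g : Matrix (Fin (n + 1)) (Fin (n + 1)) ℝ) * A) →
      ∃ c : ℝ, A = c • Q)
    (hinv : ∀ x : Fin (n + 1) → ℝ,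
      (∀ g : G, (ρ g : Matrix (Fin (n + 1)) (Fin (n + 1)) ℝ) *ᵥ x = x) →
      ∃ c : ℝ, x = c • e₀)
    (k : ℕ) (hk : 1 ≤ k) (ψ : Fin k × Fin (n + 1) → ℝ) :
    ∫ g, ((1 : Matrix (Fin k) (Fin k) ℝ) ⊗ₖ (ρ g : Matrix (Fin (n + 1)) (Fin (n + 1)) ℝ))
          * vecMulVec ψ ψ *
          ((1 : Matrix (Fin k) (Fin k) ℝ) ⊗ₖ (ρ g : Matrix (Fin (n + 1)) (Fin (n + 1)) ℝ))ᵀ ∂μ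
      = (ptrace2 (((1 : Matrix (Fin k) (Fin k) ℝ) ⊗ₖ Q) * vecMulVec ψ ψ *
            ((1 : Matrix (Fin k) (Fin k) ℝ) ⊗ₖ Q))) ⊗ₖ ((n : ℝ)⁻¹ • Q)
        + (ptrace2 (((1 : Matrix (Fin k) (Fin k) ℝ) ⊗ₖ vecMulVec e₀ e₀) * vecMulVec ψ ψ *
            ((1 : Matrix (Fin k) (Fin k) ℝ) ⊗ₖ vecMulVec e₀ e₀))) ⊗ₖ vecMulVec e₀ e₀ :=
  stmt6_general μ n hn ρ hρ e₀ he₀ hfix Q hQ hW hinv k ψ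
end

section
/- Let V be a finite-dimensional real inner product space and let C ⊆ V be a closed convex cone that is self-dual, i.e. C = {x ∈ V : ⟨x, y⟩ ≥ 0 for all y ∈ C}. Let u ∈ C and let x ∈ V satisfy ⟨u, x⟩ = 0. Then for every e ∈ V with e ∈ C and u − e ∈ C, one has 2·⟨e, x⟩ ≤ ‖u‖·‖x‖; consequently 2·sup{ |⟨e, x⟩| : e ∈ C, u − e ∈ C } ≤ ‖u‖·‖x‖. -/
/-!
Write `x = R - S` with `R ∈ C`, `S` in the dual cone and `R ⊥ S` (Moreau decomposition).
Since `⟪u, R⟫ = ⟪u, S⟫` and `‖R + S‖ = ‖R - S‖`,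
`2⟪e, x⟫ ≤ 2⟪e, R⟫ ≤ 2⟪u, R⟫ = ⟪u, R + S⟫ ≤ ‖u‖‖x‖`.
-/

open scoped RealInnerProductSpace

namespace ConvexCone

variable {V : Type*} [NormedAddCommGroup V] [InnerProductSpace ℝ V] [CompleteSpace V]
  (C : ConvexCone ℝ V)

/-- Moreau decomposition: `R` is the metric projection of `x` onto `C`, and the variational
inequality at the test points `R + y`, `2 • R` and `2⁻¹ • R` gives `R - x ∈ C*` and `R ⊥ R - x`. -/
theorem exists_eq_sub_of_mem_innerDual (hC : IsClosed (C : Set V)) (hne : (C : Set V).Nonempty)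
    (x : V) : ∃ R ∈ C, ∃ S ∈ ProperCone.innerDual (C : Set V), ⟪R, S⟫ = 0 ∧ x = R - S := by
  obtain ⟨R, hR, hmin⟩ := exists_norm_eq_iInf_of_complete_convex hne hC.isComplete C.convex x
  have hvar : ∀ w ∈ C, ⟪x - R, w - R⟫ ≤ 0 :=
    (norm_eq_iInf_iff_real_inner_le_zero C.convex hR).1 hmin
  refine ⟨R, hR, R - x, fun y hy => ?_, ?_, by abel⟩
  · have h := hvar (R + y) (C.add_mem hR hy)
    rw [add_sub_cancel_left, real_inner_comm] at h
    change 0 ≤ ⟪y, R - x⟫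
    rw [← neg_sub, inner_neg_right]
    linarith
  · have hup := hvar ((2 : ℝ) • R) (C.smul_mem two_pos hR)
    have hdown := hvar ((2 : ℝ)⁻¹ • R) (C.smul_mem (by norm_num) hR)
    rw [show (2 : ℝ) • R - R = R by module] at hup
    rw [show (2 : ℝ)⁻¹ • R - R = (-2⁻¹ : ℝ) • R by module, inner_smul_right] at hdown
    rw [← neg_sub, inner_neg_right, real_inner_comm]
    linarith

theorem two_mul_inner_le_norm_mul_norm (hC : IsClosed (C : Set V))
    (hnonneg : ∀ y ∈ C, ∀ z ∈ C, 0 ≤ ⟪y, z⟫) {u x e : V} (hux : ⟪u, x⟫ = 0)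
    (he : e ∈ C) (hue : u - e ∈ C) : 2 * ⟪e, x⟫ ≤ ‖u‖ * ‖x‖ := by
  obtain ⟨R, hR, S, hS, hRS, rfl⟩ := C.exists_eq_sub_of_mem_innerDual hC ⟨e, he⟩ x
  have heS : 0 ≤ ⟪e, S⟫ := hS he
  have heR : ⟪e, R⟫ ≤ ⟪u, R⟫ := by
    have := hnonneg _ hue R hR
    rw [inner_sub_left] at this
    linarith
  have huR : ⟪u, R⟫ = ⟪u, S⟫ := by
    rw [inner_sub_right] at hux
    linarith
  have hnorm : ‖R + S‖ = ‖R - S‖ := by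
    rw [norm_sub_eq_norm_add (by rwa [real_inner_comm])]
  calc 2 * ⟪e, R - S⟫ ≤ 2 * ⟪u, R⟫ := by rw [inner_sub_right]; linarith
    _ = ⟪u, R + S⟫ := by rw [inner_add_right]; linarith
    _ ≤ ‖u‖ * ‖R - S‖ := hnorm ▸ real_inner_le_norm u (R + S)

theorem abs_inner_le_norm_mul_norm_div_two (hC : IsClosed (C : Set V))
    (hnonneg : ∀ y ∈ C, ∀ z ∈ C, 0 ≤ ⟪y, z⟫) {u x e : V} (hux : ⟪u, x⟫ = 0)
    (he : e ∈ C) (hue : u - e ∈ C) : |⟪e, x⟫| ≤ ‖u‖ * ‖x‖ / 2 := by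
  have hupper := C.two_mul_inner_le_norm_mul_norm hC hnonneg hux he hue
  have hlower := C.two_mul_inner_le_norm_mul_norm hC hnonneg hux hue (by rwa [sub_sub_cancel])
  rw [inner_sub_left, hux] at hlower
  rw [abs_le]
  constructor <;> linarith

end ConvexCone

theorem stmt7_general {V : Type*} [NormedAddCommGroup V] [InnerProductSpace ℝ V]
    [FiniteDimensional ℝ V]
    (C : ConvexCone ℝ V) (hclosed : IsClosed (C : Set V))
    (hself : ∀ x : V, x ∈ C ↔ ∀ y ∈ C, 0 ≤ ⟪x, y⟫)
    (u : V) (x : V) (hux : ⟪u, x⟫ = 0) :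
    (∀ e : V, e ∈ C → u - e ∈ C → 2 * ⟪e, x⟫ ≤ ‖u‖ * ‖x‖) ∧
      2 * sSup {r : ℝ | ∃ e : V, e ∈ C ∧ u - e ∈ C ∧ r = |⟪e, x⟫|} ≤ ‖u‖ * ‖x‖ := by
  have hnonneg : ∀ y ∈ C, ∀ z ∈ C, 0 ≤ ⟪y, z⟫ := fun y hy => (hself y).1 hy
  refine ⟨fun e he hue => C.two_mul_inner_le_norm_mul_norm hclosed hnonneg hux he hue, ?_⟩
  have hsup : sSup {r : ℝ | ∃ e : V, e ∈ C ∧ u - e ∈ C ∧ r = |⟪e, x⟫|} ≤ ‖u‖ * ‖x‖ / 2 := by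
    refine Real.sSup_le ?_ (by positivity)
    rintro r ⟨e, he, hue, rfl⟩
    exact C.abs_inner_le_norm_mul_norm_div_two hclosed hnonneg hux he hue
  linarith

/-- Geometric core of the 1-norm vs 2-norm bound in bit-symmetric state spaces: in a
finite-dimensional real inner product space with a closed, self-dual convex cone `C`,
if `u ∈ C` and `⟪u, x⟫ = 0`, then every effect `e` (i.e. `e ∈ C`, `u - e ∈ C`) satisfies
`2⟪e, x⟫ ≤ ‖u‖‖x‖`, and hence `2 sup |⟪e, x⟫| ≤ ‖u‖‖x‖`. -/
theorem stmt7 {V : Type*} [NormedAddCommGroup V] [InnerProductSpace ℝ V]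
    [FiniteDimensional ℝ V]
    (C : ConvexCone ℝ V) (hclosed : IsClosed (C : Set V))
    (hself : ∀ x : V, x ∈ C ↔ ∀ y ∈ C, 0 ≤ ⟪x, y⟫)
    (u : V) (hu : u ∈ C) (x : V) (hux : ⟪u, x⟫ = 0) :
    (∀ e : V, e ∈ C → u - e ∈ C → 2 * ⟪e, x⟫ ≤ ‖u‖ * ‖x‖) ∧
      2 * sSup {r : ℝ | ∃ e : V, e ∈ C ∧ u - e ∈ C ∧ r = |⟪e, x⟫|} ≤ ‖u‖ * ‖x‖ :=
  stmt7_general C hclosed hself u x hux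
end

section
/- Let d_C ≥ 1 and d₁, d₂ ≥ 1 with d₁·d₂ ≥ 2, and let p : Fin d_C × (Fin d₁ × Fin d₂) → ℝ be a probability distribution (all values nonnegative and summing to 1). For a permutation π of Fin d₁ × Fin d₂ define σ(π)(c, a₂) := Σ_{a₁} p(c, π⁻¹(a₁, a₂)), and set p_C(c) := Σ_{a₁, a₂} p(c, (a₁, a₂)). Then (1/(d₁d₂)!) · Σ_{π ∈ Sym(Fin d₁ × Fin d₂)} Σ_{c, a₂} ( σ(π)(c, a₂) − p_C(c)/d₂ )² = (d₂ − 1)·( d₁d₂·Σ_{c, a} p(c, a)² − Σ_c p_C(c)² ) / ( d₂·(d₁d₂ − 1) ). -/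
/-!
For fixed `c` and `a₂`, the inner sum `∑ a₁, p (c, π⁻¹ (a₁, a₂))` adds up `q = p (c, ·)` over the
image of the fibre `{(a₁, a₂)}` under a uniformly random permutation, i.e. over a sample of
`k = d₁` of the `n = d₁ d₂` points drawn without replacement. Its mean-square deviation is the
classical one for such samples, `k (n - k) / (n - 1)` times the population variance of `q`.
Both moments it needs come from one counting principle: summing `f (g • x)` over a finite group
gives `|G| / |orbit x|` times the sum of `f` over the orbit, applied to `Perm α` acting on `α` and
on pairs of distinct points.
-/
open Finset MulAction Equiv

section OrbitSum

variable {G X M : Type*} [Group G] [Fintype G] [MulAction G X] [AddCommMonoid M]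

theorem sum_comp_smul_eq_of_mem_orbit (f : X → M) {x y : X} (hy : y ∈ orbit G x) :
    ∑ g : G, f (g • y) = ∑ g : G, f (g • x) := by
  obtain ⟨h, rfl⟩ := hy
  exact Fintype.sum_equiv (Equiv.mulRight h) _ _ fun g => by simp [mul_smul]

theorem card_nsmul_sum_comp_smul_of_coe_eq_orbit {s : Finset X} {x : X}
    (hs : (s : Set X) = orbit G x) (f : X → M) :
    #s • ∑ g : G, f (g • x) = Fintype.card G • ∑ y ∈ s, f y := by
  have hmem : ∀ y, y ∈ s ↔ y ∈ orbit G x := fun y => by rw [← hs, mem_coe]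
  calc #s • ∑ g : G, f (g • x) = ∑ y ∈ s, ∑ g : G, f (g • y) := by
        rw [← sum_const]
        exact sum_congr rfl fun y hy => (sum_comp_smul_eq_of_mem_orbit f ((hmem y).1 hy)).symm
    _ = ∑ g : G, ∑ y ∈ s, f (g • y) := sum_comm
    _ = ∑ g : G, ∑ y ∈ s, f y := sum_congr rfl fun g _ =>
        sum_nbij' (g • ·) (g⁻¹ • ·)
          (fun y hy => (hmem _).2 (mem_orbit_of_mem_orbit g ((hmem y).1 hy)))
          (fun y hy => (hmem _).2 (mem_orbit_of_mem_orbit g⁻¹ ((hmem y).1 hy)))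
          (fun y _ => inv_smul_smul g y) (fun y _ => smul_inv_smul g y) fun _ _ => rfl
    _ = Fintype.card G • ∑ y ∈ s, f y := by rw [sum_const, card_univ]

end OrbitSum

theorem Finset.sum_offDiag_mul {α R : Type*} [DecidableEq α] [CommRing R] (s : Finset α)
    (f : α → R) :
    ∑ p ∈ s.offDiag, f p.1 * f p.2 = (∑ a ∈ s, f a) ^ 2 - ∑ a ∈ s, f a ^ 2 := by
  rw [eq_sub_iff_add_eq, sq, sum_mul_sum, ← sum_product', ← diag_union_offDiag,
    sum_union (disjoint_diag_offDiag s), sum_diag, add_comm]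
  simp only [sq]

namespace Equiv.Perm

variable {α : Type*} [Fintype α]

theorem coe_offDiag_univ_eq_orbit {x y : α} (hxy : x ≠ y) :
    ((univ : Finset α).offDiag : Set (α × α)) = orbit (Perm α) (x, y) := by
  ext ⟨a, b⟩
  simp only [coe_offDiag, coe_univ, Set.offDiag, Set.mem_univ, true_and, Set.mem_ofPred_eq,
    mem_orbit_iff, Prod.smul_mk, Prod.mk.injEq, Perm.smul_def]
  constructor
  · exact is_two_pretransitive_iff.1 (isMultiplyPretransitive α 2) hxy
  · rintro ⟨π, rfl, rfl⟩
    exact π.injective.ne hxy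

variable [DecidableEq α]

theorem card_mul_sum_comp_apply (q : α → ℝ) (x : α) :
    (Fintype.card α : ℝ) * ∑ π : Perm α, q (π x) = (Fintype.card α).factorial * ∑ a, q a := by
  have h := card_nsmul_sum_comp_smul_of_coe_eq_orbit (G := Perm α) (s := univ) (x := x)
    (by rw [coe_univ, orbit_eq_univ]) q
  simpa only [card_univ, Fintype.card_perm, nsmul_eq_mul, Perm.smul_def] using h

theorem card_mul_card_sub_one_mul_sum_comp_apply_mul (q : α → ℝ) {x y : α} (hxy : x ≠ y) :
    (Fintype.card α : ℝ) * (Fintype.card α - 1) * ∑ π : Perm α, q (π x) * q (π y)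
      = (Fintype.card α).factorial * ((∑ a, q a) ^ 2 - ∑ a, q a ^ 2) := by
  have h := card_nsmul_sum_comp_smul_of_coe_eq_orbit (coe_offDiag_univ_eq_orbit hxy)
    (fun p => q p.1 * q p.2)
  rw [sum_offDiag_mul, offDiag_card, card_univ, Fintype.card_perm, nsmul_eq_mul, nsmul_eq_mul,
    Nat.cast_sub (Nat.le_mul_self _)] at h
  simpa only [Nat.cast_mul, mul_sub_one, Prod.smul_mk, Perm.smul_def] using h

theorem card_mul_sum_sum_comp_apply (S : Finset α) (q : α → ℝ) :
    (Fintype.card α : ℝ) * ∑ π : Perm α, ∑ x ∈ S, q (π x)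
      = (Fintype.card α).factorial * #S * ∑ a, q a := by
  rw [sum_comm, mul_sum, sum_congr rfl fun x _ => card_mul_sum_comp_apply q x, sum_const,
    nsmul_eq_mul]
  ring

theorem card_mul_card_sub_one_mul_sum_sq_sum_comp_apply (S : Finset α) (q : α → ℝ) :
    (Fintype.card α : ℝ) * (Fintype.card α - 1) * ∑ π : Perm α, (∑ x ∈ S, q (π x)) ^ 2
      = (Fintype.card α).factorial * ((Fintype.card α - 1) * #S * ∑ a, q a ^ 2
          + (#S * #S - #S) * ((∑ a, q a) ^ 2 - ∑ a, q a ^ 2)) := by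
  have hsq : ∀ π : Perm α, (∑ x ∈ S, q (π x)) ^ 2
      = ∑ x ∈ S, q (π x) ^ 2 + ∑ p ∈ S.offDiag, q (π p.1) * q (π p.2) := fun π => by
    rw [sum_offDiag_mul S (fun x => q (π x))]; ring
  have hdiag : ∀ x, (Fintype.card α : ℝ) * (Fintype.card α - 1) * ∑ π : Perm α, q (π x) ^ 2
      = (Fintype.card α).factorial * ((Fintype.card α - 1) * ∑ a, q a ^ 2) := fun x => by
    rw [mul_right_comm, card_mul_sum_comp_apply (q · ^ 2) x]; ring
  have hoff : ∀ p ∈ S.offDiag, (Fintype.card α : ℝ) * (Fintype.card α - 1)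
      * ∑ π : Perm α, q (π p.1) * q (π p.2)
      = (Fintype.card α).factorial * ((∑ a, q a) ^ 2 - ∑ a, q a ^ 2) := fun p hp =>
    card_mul_card_sub_one_mul_sum_comp_apply_mul q (mem_offDiag.1 hp).2.2
  simp_rw [hsq, sum_add_distrib]
  rw [sum_comm, sum_comm (s := univ), mul_add, mul_sum, mul_sum, sum_congr rfl fun x _ => hdiag x,
    sum_congr rfl hoff, sum_const, sum_const, nsmul_eq_mul, nsmul_eq_mul, offDiag_card,
    Nat.cast_sub (Nat.le_mul_self _), Nat.cast_mul]
  ring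

theorem sq_card_mul_card_sub_one_mul_sum_sub_sq (S : Finset α) (q : α → ℝ) :
    (Fintype.card α : ℝ) ^ 2 * (Fintype.card α - 1)
        * ∑ π : Perm α, (∑ x ∈ S, q (π x) - #S / Fintype.card α * ∑ a, q a) ^ 2
      = (Fintype.card α).factorial * #S * (Fintype.card α - #S)
          * (Fintype.card α * ∑ a, q a ^ 2 - (∑ a, q a) ^ 2) := by
  set n : ℝ := (Fintype.card α : ℝ)
  have hmean : n * (#S / n * ∑ a, q a) = #S * ∑ a, q a := by
    rcases eq_or_ne n 0 with hn | hn
    · have hS : #S = 0 := by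
        have hα : Fintype.card α = 0 := Nat.cast_eq_zero.mp hn
        simpa [hα] using S.card_le_univ
      simp [hn, hS]
    · field_simp
  generalize #S / n * ∑ a, q a = m at hmean ⊢
  have hexpand : ∑ π : Perm α, (∑ x ∈ S, q (π x) - m) ^ 2
      = ∑ π : Perm α, (∑ x ∈ S, q (π x)) ^ 2 - 2 * m * ∑ π : Perm α, ∑ x ∈ S, q (π x)
        + (Fintype.card α).factorial * m ^ 2 := by
    rw [sum_congr rfl fun π _ => sub_sq _ m, sum_add_distrib, sum_sub_distrib, ← sum_mul,
      ← mul_sum, sum_const, card_univ, Fintype.card_perm, nsmul_eq_mul]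
    ring
  rw [hexpand]
  linear_combination n * card_mul_card_sub_one_mul_sum_sq_sum_comp_apply S q
    - 2 * (n - 1) * m * n * card_mul_sum_sum_comp_apply S q
    + (Fintype.card α).factorial * (n - 1) * (n * m - #S * ∑ a, q a) * hmean

end Equiv.Perm

theorem sum_perm_sum_fiber_sub_sq {d₁ d₂ : ℕ} (hd₁ : (d₁ : ℝ) ≠ 0) (hd₂ : (d₂ : ℝ) ≠ 0)
    (hd₁d₂ : (d₁ * d₂ : ℝ) - 1 ≠ 0) (q : Fin d₁ × Fin d₂ → ℝ) (a₂ : Fin d₂) :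
    ∑ π : Perm (Fin d₁ × Fin d₂), (∑ a₁, q (π (a₁, a₂)) - (∑ a, q a) / d₂) ^ 2
      = (d₁ * d₂).factorial * (d₂ - 1) * ((d₁ * d₂ : ℝ) * ∑ a, q a ^ 2 - (∑ a, q a) ^ 2)
          / (d₂ ^ 2 * ((d₁ * d₂ : ℝ) - 1)) := by
  have h := Perm.sq_card_mul_card_sub_one_mul_sum_sub_sq (univ ×ˢ {a₂}) q
  simp only [sum_product, sum_singleton, card_product, card_univ, card_singleton,
    Fintype.card_prod, Fintype.card_fin, Nat.cast_mul, mul_one] at h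
  rw [div_mul_cancel_left₀ hd₁, ← div_eq_inv_mul] at h
  rw [eq_div_iff (mul_ne_zero (pow_ne_zero 2 hd₂) hd₁d₂)]
  refine mul_left_cancel₀ (pow_ne_zero 2 hd₁) ?_
  linear_combination h

theorem stmt11_general (dC d₁ d₂ : ℕ) (hd : 2 ≤ d₁ * d₂)
    (p : Fin dC × (Fin d₁ × Fin d₂) → ℝ) :
    (((d₁ * d₂).factorial : ℝ))⁻¹ *
        ∑ π : Equiv.Perm (Fin d₁ × Fin d₂), ∑ c : Fin dC, ∑ a₂ : Fin d₂,
          ((∑ a₁ : Fin d₁, p (c, π⁻¹ (a₁, a₂)))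
            - (∑ a : Fin d₁ × Fin d₂, p (c, a)) / (d₂ : ℝ)) ^ 2
      = ((d₂ : ℝ) - 1) *
          ((d₁ * d₂ : ℝ) * (∑ c : Fin dC, ∑ a : Fin d₁ × Fin d₂, p (c, a) ^ 2)
            - ∑ c : Fin dC, (∑ a : Fin d₁ × Fin d₂, p (c, a)) ^ 2)
        / ((d₂ : ℝ) * ((d₁ * d₂ : ℝ) - 1)) := by
  have hd₁ : (d₁ : ℝ) ≠ 0 := by norm_cast; rintro rfl; omega
  have hd₂ : (d₂ : ℝ) ≠ 0 := by norm_cast; rintro rfl; omega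
  have hd₁d₂ : (d₁ * d₂ : ℝ) - 1 ≠ 0 := by
    have : (2 : ℝ) ≤ d₁ * d₂ := by exact_mod_cast hd
    linarith
  calc (((d₁ * d₂).factorial : ℝ))⁻¹ *
        ∑ π : Perm (Fin d₁ × Fin d₂), ∑ c : Fin dC, ∑ a₂ : Fin d₂,
          ((∑ a₁ : Fin d₁, p (c, π⁻¹ (a₁, a₂))) - (∑ a, p (c, a)) / (d₂ : ℝ)) ^ 2
      = (((d₁ * d₂).factorial : ℝ))⁻¹ * ∑ c : Fin dC, ∑ a₂ : Fin d₂,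
          ∑ π : Perm (Fin d₁ × Fin d₂),
            ((∑ a₁ : Fin d₁, p (c, π (a₁, a₂))) - (∑ a, p (c, a)) / (d₂ : ℝ)) ^ 2 := by
        congr 1
        rw [sum_comm]
        refine sum_congr rfl fun c _ => ?_
        rw [sum_comm]
        exact sum_congr rfl fun a₂ _ => Fintype.sum_equiv (Equiv.inv _) _ _ fun π => rfl
    _ = _ := by
        rw [sum_congr rfl fun c _ => sum_congr rfl fun a₂ _ =>
          sum_perm_sum_fiber_sub_sq hd₁ hd₂ hd₁d₂ (fun a => p (c, a)) a₂]
        simp_rw [sum_const, card_univ, Fintype.card_fin, nsmul_eq_mul, ← mul_sum, ← sum_div,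
          ← mul_sum, sum_sub_distrib, ← mul_sum]
        field_simp

/-- The classical-probability instance of the paper's decoupling Corollary in 2-norm:
averaging over all permutation dynamics of `A = A₁A₂`, the mean squared Euclidean distance
between the joint marginal on `C × A₂` and the decoupled distribution `p_C ⊗ uniform`. -/
theorem stmt11 (dC d₁ d₂ : ℕ) (hdC : 1 ≤ dC) (hd₁ : 1 ≤ d₁) (hd₂ : 1 ≤ d₂)
    (hd : 2 ≤ d₁ * d₂)
    (p : Fin dC × (Fin d₁ × Fin d₂) → ℝ)
    (hpos : ∀ x, 0 ≤ p x) (hsum : ∑ x, p x = 1) :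
    (((d₁ * d₂).factorial : ℝ))⁻¹ *
        ∑ π : Equiv.Perm (Fin d₁ × Fin d₂), ∑ c : Fin dC, ∑ a₂ : Fin d₂,
          ((∑ a₁ : Fin d₁, p (c, π⁻¹ (a₁, a₂)))
            - (∑ a : Fin d₁ × Fin d₂, p (c, a)) / (d₂ : ℝ)) ^ 2
      = ((d₂ : ℝ) - 1) *
          ((d₁ * d₂ : ℝ) * (∑ c : Fin dC, ∑ a : Fin d₁ × Fin d₂, p (c, a) ^ 2)
            - ∑ c : Fin dC, (∑ a : Fin d₁ × Fin d₂, p (c, a)) ^ 2)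
        / ((d₂ : ℝ) * ((d₁ * d₂ : ℝ) - 1)) :=
  stmt11_general dC d₁ d₂ hd p
end
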